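/- arXiv:1112.5741 — 3 statements merged into one kernel-verified Lean document; each statement's English description precedes it below -/
import Mathlib

section
/- If f: {0,1}^n → {0,1} is ε-far from being t-symmetric, then for every set J ⊆ [n] with |J| ≥ t, SymInf_f(J) ≥ ε. -/
open Finset

variable {n : ℕ}

/-- `override J x y` is the vector equal to `y` on `J` and `x` elsewhere. -/
def override (J : Finset (Fin n)) (x y : Fin n → Bool) : Fin n → Bool :=
  fun i => if i ∈ J then y i else x i

/-- Influence of the set `J` in `f`. -/
noncomputable def Infl (f : (Fin n → Bool) → Bool) (J : Finset (Fin n)) : ℝ :=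
  ((Finset.univ.filter (fun p : (Fin n → Bool) × (Fin n → Bool) =>
      f p.1 ≠ f (override J p.1 p.2))).card : ℝ) / ((2 ^ n : ℝ) * (2 ^ n : ℝ))

/-- Normalized Hamming distance between Boolean functions. -/
noncomputable def hdist (f g : (Fin n → Bool) → Bool) : ℝ :=
  ((Finset.univ.filter (fun x => f x ≠ g x)).card : ℝ) / (2 ^ n : ℝ)

/-- `g` is a `k`-junta: it depends on at most `k` variables. -/
def IsJunta (k : ℕ) (g : (Fin n → Bool) → Bool) : Prop :=
  ∃ S : Finset (Fin n), S.card ≤ k ∧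
    ∀ x y : Fin n → Bool, (∀ i ∈ S, x i = y i) → g x = g y

/-- The permutations of `[n]` fixing every element outside `J`. -/
def permsOn (J : Finset (Fin n)) : Finset (Equiv.Perm (Fin n)) :=
  Finset.univ.filter (fun π => ∀ i ∉ J, π i = i)

/-- The action of a permutation on a vector: `(π • x)_{π(i)} = x_i`. -/
def permApply (π : Equiv.Perm (Fin n)) (x : Fin n → Bool) : Fin n → Bool :=
  fun j => x (π.symm j)

/-- Symmetric influence of the set `J` in `f`. -/
noncomputable def SymInf (f : (Fin n → Bool) → Bool) (J : Finset (Fin n)) : ℝ :=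
  (((Finset.univ ×ˢ permsOn J).filter (fun p : (Fin n → Bool) × Equiv.Perm (Fin n) =>
      f p.1 ≠ f (permApply p.2 p.1))).card : ℝ) /
    ((2 ^ n : ℝ) * ((permsOn J).card : ℝ))

/-- `f` is `J`-symmetric: invariant under permuting the coordinates in `J`. -/
def JSymmetric (f : (Fin n → Bool) → Bool) (J : Finset (Fin n)) : Prop :=
  ∀ x : Fin n → Bool, ∀ π ∈ permsOn J, f (permApply π x) = f x

/-- `f` is `t`-symmetric: it is `J`-symmetric for some `J` of size at least `t`. -/
def TSymmetric (t : ℕ) (f : (Fin n → Bool) → Bool) : Prop :=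
  ∃ J : Finset (Fin n), t ≤ J.card ∧ JSymmetric f J

/-! Let `g` be the majority vote of `f` over each orbit of the group of permutations of `J`.
Then `g` is `J`-symmetric, so `f` disagrees with `g` on an `ε`-fraction of inputs. Since `g` is
constant on orbits, `f x ≠ f (π • x)` holds exactly when one of `x`, `π • x` is an error of `g`,
and `(x, π) ↦ (π • x, π⁻¹)` exchanges the two cases; so these pairs are twice the pairs leaving
an error `x` for a non-error. By the majority choice, at least half of all `π` do this from any
error `x`. -/

theorem card_filter_prod_eq_sum {α β : Type*} [Fintype α] [Fintype β] (P : α → β → Prop)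
    [∀ a b, Decidable (P a b)] :
    #{p : α × β | P p.1 p.2} = ∑ a, #{b | P a b} := by
  simp only [Finset.card_filter, Fintype.sum_prod_type]

section OrbitMajority

variable {G X : Type*} [Group G] [Fintype G] [MulAction G X]

variable (G) in
def orbitMajority (f : X → Bool) (x : X) : Bool :=
  decide (Fintype.card G ≤ 2 * #{g : G | f (g • x) = true})

theorem orbitMajority_smul (f : X → Bool) (h : G) (x : X) :
    orbitMajority G f (h • x) = orbitMajority G f x := by
  have hcount : #{g : G | f (g • h • x) = true} = #{g : G | f (g • x) = true} :=
    Finset.card_equiv (Equiv.mulRight h) (by simp [mul_smul])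
  rw [orbitMajority, orbitMajority, hcount]

theorem card_le_two_mul_card_smul_eq_orbitMajority (f : X → Bool) (x : X) :
    Fintype.card G ≤ 2 * #{g : G | f (g • x) = orbitMajority G f x} := by
  have hsplit := Finset.card_filter_add_card_filter_not (s := univ) (fun g : G => f (g • x) = true)
  rw [card_univ] at hsplit
  cases hm : orbitMajority G f x
  · simp only [orbitMajority, decide_eq_false_iff_not, not_le] at hm
    simp only [Bool.not_eq_true] at hsplit
    omega
  · simpa only [orbitMajority, decide_eq_true_eq] using hm

variable [Fintype X]

theorem card_mem_not_smul_mem_eq (a : X → Prop) [DecidablePred a] :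
    #{p : X × G | a p.1 ∧ ¬a (p.2 • p.1)} = #{p : X × G | ¬a p.1 ∧ a (p.2 • p.1)} := by
  let e : X × G ≃ X × G := Function.Involutive.toPerm (fun p => (p.2 • p.1, p.2⁻¹))
    (fun p => by simp [smul_smul])
  refine Finset.card_equiv e fun p => ?_
  simp only [Finset.mem_filter, Finset.mem_univ, true_and]
  show _ ↔ ¬a (p.2 • p.1) ∧ a (p.2⁻¹ • p.2 • p.1)
  rw [inv_smul_smul, and_comm]

theorem card_ne_smul_eq_two_mul_card (f m : X → Bool) (hm : ∀ (g : G) x, m (g • x) = m x) :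
    #{p : X × G | f p.1 ≠ f (p.2 • p.1)}
      = 2 * #{p : X × G | f p.1 ≠ m p.1 ∧ f (p.2 • p.1) = m p.1} := by
  classical
  have hsplit : #{p : X × G | f p.1 ≠ f (p.2 • p.1)}
      = #{p : X × G | f p.1 ≠ m p.1 ∧ ¬f (p.2 • p.1) ≠ m (p.2 • p.1)}
        + #{p : X × G | ¬f p.1 ≠ m p.1 ∧ f (p.2 • p.1) ≠ m (p.2 • p.1)} := by
    rw [← Finset.card_union_of_disjoint (Finset.disjoint_filter.2 fun p _ h h' => h'.1 h.1),
      ← Finset.filter_or]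
    refine congrArg card (Finset.filter_congr fun p _ => ?_)
    rw [hm]
    cases f p.1 <;> cases f (p.2 • p.1) <;> cases m p.1 <;> decide
  rw [hsplit, ← card_mem_not_smul_mem_eq (fun x => f x ≠ m x), two_mul]
  simp only [ne_eq, not_not, hm]

theorem card_ne_orbitMajority_mul_card_le (f : X → Bool) :
    #{x | f x ≠ orbitMajority G f x} * Fintype.card G ≤ #{p : X × G | f p.1 ≠ f (p.2 • p.1)} := by
  set m := orbitMajority G f
  calc #{x | f x ≠ m x} * Fintype.card G
      = ∑ x with f x ≠ m x, Fintype.card G := by rw [Finset.sum_const, smul_eq_mul]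
    _ ≤ ∑ x with f x ≠ m x, 2 * #{g : G | f (g • x) = m x} :=
      Finset.sum_le_sum fun x _ => card_le_two_mul_card_smul_eq_orbitMajority f x
    _ = 2 * #{p : X × G | f p.1 ≠ m p.1 ∧ f (p.2 • p.1) = m p.1} := by
      rw [card_filter_prod_eq_sum (fun x (g : G) => f x ≠ m x ∧ f (g • x) = m x),
        Finset.sum_filter, Finset.mul_sum]
      refine Finset.sum_congr rfl fun x _ => ?_
      split_ifs with hx <;> simp [hx]
    _ = #{p : X × G | f p.1 ≠ f (p.2 • p.1)} :=
      (card_ne_smul_eq_two_mul_card f m (orbitMajority_smul f)).symm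

end OrbitMajority

attribute [local instance] arrowAction

theorem permApply_eq_smul (π : Equiv.Perm (Fin n)) (x : Fin n → Bool) : permApply π x = π • x :=
  rfl

def permSubgroupOn (J : Finset (Fin n)) : Subgroup (Equiv.Perm (Fin n)) :=
  fixingSubgroup (Equiv.Perm (Fin n)) (J : Set (Fin n))ᶜ

theorem mem_permsOn_iff {J : Finset (Fin n)} {π : Equiv.Perm (Fin n)} :
    π ∈ permsOn J ↔ π ∈ permSubgroupOn J := by
  simp [permsOn, permSubgroupOn, mem_fixingSubgroup_iff]

instance (J : Finset (Fin n)) : DecidablePred (· ∈ permSubgroupOn J) :=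
  fun _ => decidable_of_iff _ mem_permsOn_iff

theorem jSymmetric_orbitMajority (f : (Fin n → Bool) → Bool) (J : Finset (Fin n)) :
    JSymmetric (orbitMajority (permSubgroupOn J) f) J :=
  fun x π hπ => by
    rw [permApply_eq_smul, ← Subgroup.mk_smul π (mem_permsOn_iff.1 hπ), orbitMajority_smul]

theorem card_permsOn (J : Finset (Fin n)) : #(permsOn J) = Fintype.card (permSubgroupOn J) := by
  rw [Fintype.card_subtype]
  exact congrArg card (Finset.ext fun π => by simp [mem_permsOn_iff])

theorem card_filter_product_permsOn (J : Finset (Fin n))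
    (P : (Fin n → Bool) → Equiv.Perm (Fin n) → Prop) [∀ x π, Decidable (P x π)] :
    #{p ∈ univ ×ˢ permsOn J | P p.1 p.2}
      = #{q : (Fin n → Bool) × permSubgroupOn J | P q.1 q.2} := by
  refine Finset.card_bij'
    (fun p hp => (p.1, ⟨p.2, mem_permsOn_iff.1 (mem_product.1 (mem_filter.1 hp).1).2⟩))
    (fun q _ => (q.1, q.2)) ?_ ?_ ?_ ?_ <;> simp_all [mem_permsOn_iff]

theorem symInf_eq (f : (Fin n → Bool) → Bool) (J : Finset (Fin n)) :
    SymInf f J = #{q : (Fin n → Bool) × permSubgroupOn J | f q.1 ≠ f (q.2 • q.1)} /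
      (2 ^ n * Fintype.card (permSubgroupOn J)) := by
  rw [SymInf, card_filter_product_permsOn J (fun x π => f x ≠ f (permApply π x)), card_permsOn]
  rfl

/-- if `f` is `ε`-far from being `t`-symmetric, then every set of size
at least `t` has symmetric influence at least `ε`. -/
theorem symInf_ge_of_far_from_tSymmetric (n t : ℕ) (ε : ℝ)
    (f : (Fin n → Bool) → Bool)
    (hfar : ∀ g : (Fin n → Bool) → Bool, TSymmetric t g → ε ≤ hdist f g)
    (J : Finset (Fin n)) (hJ : t ≤ J.card) :
    ε ≤ SymInf f J := by
  set H := permSubgroupOn J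
  have hsymm : TSymmetric t (orbitMajority H f) := ⟨J, hJ, jSymmetric_orbitMajority f J⟩
  have hcount : (#{x | f x ≠ orbitMajority H f x} : ℝ) * Fintype.card H
      ≤ #{q : (Fin n → Bool) × H | f q.1 ≠ f (q.2 • q.1)} := by
    exact_mod_cast card_ne_orbitMajority_mul_card_le f
  calc ε ≤ hdist f (orbitMajority H f) := hfar _ hsymm
    _ = #{x | f x ≠ orbitMajority H f x} * Fintype.card H / (2 ^ n * Fintype.card H) := by
      rw [hdist, mul_div_mul_right _ _ (by positivity)]
    _ ≤ SymInf f J := by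
      rw [symInf_eq]
      exact div_le_div_of_nonneg_right hcount (by positivity)
end

section
/- For a Boolean function f: {0,1}^n → {-1,1} and J ⊆ [n], the symmetric influence satisfies SymInf_f(J) = (1/2) Σ_{S ⊆ [n]} Var_{π ∈ S_J}[f̂(πS)], where f̂(S) are the Fourier coefficients of f and πS = {π(i) : i ∈ S}. -/
open Finset

variable {n : ℕ}

/-- The character `χ_S(x) = (-1)^{Σ_{i∈S} x_i}`. -/
def chi {n : ℕ} (S : Finset (Fin n)) (x : Fin n → Bool) : ℝ :=
  ∏ i ∈ S, (if x i then (-1 : ℝ) else 1)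

/-- Fourier coefficient of `f` at `S`. -/
noncomputable def fhat {n : ℕ} (f : (Fin n → Bool) → ℝ) (S : Finset (Fin n)) : ℝ :=
  (∑ x : Fin n → Bool, f x * chi S x) / (2 ^ n : ℝ)

/-- Symmetric influence of a `±1`-valued function. -/
noncomputable def SymInfR {n : ℕ} (f : (Fin n → Bool) → ℝ) (J : Finset (Fin n)) : ℝ :=
  (((Finset.univ ×ˢ permsOn J).filter (fun p : (Fin n → Bool) × Equiv.Perm (Fin n) =>
      f p.1 ≠ f (permApply p.2 p.1))).card : ℝ) /
    ((2 ^ n : ℝ) * ((permsOn J).card : ℝ))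

/-- Expectation over a uniformly random permutation in `permsOn J`. -/
noncomputable def permExp {n : ℕ} (J : Finset (Fin n)) (g : Equiv.Perm (Fin n) → ℝ) : ℝ :=
  (∑ π ∈ permsOn J, g π) / ((permsOn J).card : ℝ)

/-! For `±1`-valued `f`, `1[f x ≠ f (π x)] = (f x - f (π x))² / 4`, so by Parseval
`SymInf_f(J) = ¼ 𝔼_π Σ_S (f̂(S) - f̂(πS))²`. On the other side `Var_π X = ½ 𝔼_{π,σ} (X_π - X_σ)²`;
for `X_π = f̂(πS)`, summing over `S` and substituting `S ↦ π⁻¹S`, then `σ ↦ σπ` (which preserves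
the uniform measure on the group `S_J`), turns `Σ_S Var_π f̂(πS)` into
`½ 𝔼_σ Σ_S (f̂(S) - f̂(σS))²`. -/

lemma chi_mul_chi (S : Finset (Fin n)) (x y : Fin n → Bool) :
    chi S x * chi S y = ∏ i ∈ S, (if x i = y i then (1 : ℝ) else -1) := by
  rw [chi, chi, ← prod_mul_distrib]
  refine prod_congr rfl fun i _ => ?_
  cases x i <;> cases y i <;> norm_num

lemma sum_chi_mul_chi (x y : Fin n → Bool) :
    ∑ S : Finset (Fin n), chi S x * chi S y = if x = y then (2 : ℝ) ^ n else 0 := by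
  have h : ∀ i, 1 + (if x i = y i then (1 : ℝ) else -1) = if x i = y i then 2 else 0 := by
    intro i; split_ifs <;> norm_num
  simp only [chi_mul_chi, ← powerset_univ, ← prod_one_add, h, Fintype.prod_ite_zero,
    funext_iff, prod_const, card_univ, Fintype.card_fin]

lemma sum_fhat_sq (h : (Fin n → Bool) → ℝ) :
    ∑ S : Finset (Fin n), fhat h S ^ 2 = (∑ x, h x ^ 2) / 2 ^ n := by
  have hsum : ∑ S : Finset (Fin n), (∑ x, h x * chi S x) ^ 2 = 2 ^ n * ∑ x, h x ^ 2 := by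
    calc ∑ S : Finset (Fin n), (∑ x, h x * chi S x) ^ 2
        = ∑ S : Finset (Fin n), ∑ x, ∑ y, h x * h y * (chi S x * chi S y) := by
          refine sum_congr rfl fun S _ => ?_
          rw [sq, sum_mul_sum]
          exact sum_congr rfl fun x _ => sum_congr rfl fun y _ => by ring
      _ = ∑ x, ∑ y, h x * h y * ∑ S : Finset (Fin n), chi S x * chi S y := by
          simp_rw [mul_sum]
          rw [sum_comm]
          exact sum_congr rfl fun x _ => sum_comm
      _ = 2 ^ n * ∑ x, h x ^ 2 := by
          simp [sum_chi_mul_chi, mul_sum, sq, mul_comm]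
  simp only [fhat, div_pow, ← sum_div, hsum]
  field_simp

lemma fhat_sub (f g : (Fin n → Bool) → ℝ) (S : Finset (Fin n)) :
    fhat (f - g) S = fhat f S - fhat g S := by
  simp only [fhat, Pi.sub_apply, sub_mul, sum_sub_distrib, sub_div]

def permApplyEquiv (π : Equiv.Perm (Fin n)) : (Fin n → Bool) ≃ (Fin n → Bool) where
  toFun := permApply π
  invFun := permApply π.symm
  left_inv x := by ext; simp [permApply]
  right_inv x := by ext; simp [permApply]

lemma chi_image_permApply (π : Equiv.Perm (Fin n)) (S : Finset (Fin n)) (x : Fin n → Bool) :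
    chi (S.image π) (permApply π x) = chi S x := by
  simp [chi, permApply, prod_image π.injective.injOn]

lemma fhat_comp_permApply (f : (Fin n → Bool) → ℝ) (π : Equiv.Perm (Fin n))
    (S : Finset (Fin n)) : fhat (fun x => f (permApply π x)) S = fhat f (S.image π) := by
  rw [fhat, fhat, ← (permApplyEquiv π).sum_comp (fun x => f x * chi (S.image π) x)]
  simp [permApplyEquiv, chi_image_permApply]

lemma one_mem_permsOn (J : Finset (Fin n)) : 1 ∈ permsOn J := by
  simp [permsOn]

lemma mul_mem_permsOn {J : Finset (Fin n)} {σ π : Equiv.Perm (Fin n)}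
    (hσ : σ ∈ permsOn J) (hπ : π ∈ permsOn J) : σ * π ∈ permsOn J := by
  simp only [permsOn, mem_filter, mem_univ, true_and] at *
  intro i hi
  rw [Equiv.Perm.mul_apply, hπ i hi, hσ i hi]

lemma inv_mem_permsOn {J : Finset (Fin n)} {π : Equiv.Perm (Fin n)}
    (hπ : π ∈ permsOn J) : π⁻¹ ∈ permsOn J := by
  simp only [permsOn, mem_filter, mem_univ, true_and] at *
  intro i hi
  rw [Equiv.Perm.inv_eq_iff_eq, hπ i hi]

lemma card_permsOn_ne_zero (J : Finset (Fin n)) : ((permsOn J).card : ℝ) ≠ 0 := by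
  exact_mod_cast (card_pos.2 ⟨1, one_mem_permsOn J⟩).ne'

lemma permExp_const (J : Finset (Fin n)) (c : ℝ) : permExp J (fun _ => c) = c := by
  simp [permExp, sum_const, nsmul_eq_mul, card_permsOn_ne_zero J]

lemma permExp_congr (J : Finset (Fin n)) {g g' : Equiv.Perm (Fin n) → ℝ}
    (h : ∀ π ∈ permsOn J, g π = g' π) : permExp J g = permExp J g' := by
  rw [permExp, permExp, sum_congr rfl h]

lemma permExp_comp_mul_right (J : Finset (Fin n)) {π : Equiv.Perm (Fin n)}
    (hπ : π ∈ permsOn J) (g : Equiv.Perm (Fin n) → ℝ) :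
    permExp J (fun σ => g (σ * π)) = permExp J g := by
  rw [permExp, permExp]
  congr 1
  exact sum_nbij' (· * π) (· * π⁻¹) (fun σ hσ => mul_mem_permsOn hσ hπ)
    (fun σ hσ => mul_mem_permsOn hσ (inv_mem_permsOn hπ)) (fun σ _ => by simp)
    (fun σ _ => by simp) (fun σ _ => rfl)

lemma permExp_sum {ι : Type*} (s : Finset ι) (J : Finset (Fin n))
    (g : ι → Equiv.Perm (Fin n) → ℝ) :
    permExp J (fun π => ∑ i ∈ s, g i π) = ∑ i ∈ s, permExp J (g i) := by
  simp only [permExp, ← sum_div]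
  rw [sum_comm]

lemma permExp_sq_sub_sq_permExp (J : Finset (Fin n)) (X : Equiv.Perm (Fin n) → ℝ) :
    permExp J (fun π => X π ^ 2) - permExp J X ^ 2
      = permExp J (fun π => permExp J (fun σ => (X π - X σ) ^ 2)) / 2 := by
  have hM := card_permsOn_ne_zero J
  have h : ∑ π ∈ permsOn J, ∑ σ ∈ permsOn J, (X π - X σ) ^ 2
      = 2 * (permsOn J).card * ∑ π ∈ permsOn J, X π ^ 2 - 2 * (∑ π ∈ permsOn J, X π) ^ 2 := by
    have hexp : ∀ a b : ℝ, (a - b) ^ 2 = a ^ 2 + b ^ 2 - 2 * a * b := fun a b => by ring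
    simp only [hexp, sum_add_distrib, sum_sub_distrib, sum_const, nsmul_eq_mul, ← mul_sum,
      ← sum_mul]
    ring
  simp only [permExp, ← sum_div, h]
  field_simp

lemma sum_univ_image_perm (G : Finset (Fin n) → ℝ) (π : Equiv.Perm (Fin n)) :
    ∑ S : Finset (Fin n), G (S.image π) = ∑ S : Finset (Fin n), G S := by
  simpa [Equiv.finsetCongr_apply, map_eq_image] using (π.finsetCongr).sum_comp G

lemma sum_permExp_variance_image (J : Finset (Fin n)) (g : Finset (Fin n) → ℝ) :
    ∑ S : Finset (Fin n),
        (permExp J (fun π => g (S.image π) ^ 2) - permExp J (fun π => g (S.image π)) ^ 2)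
      = permExp J (fun π => ∑ S : Finset (Fin n), (g S - g (S.image π)) ^ 2) / 2 := by
  calc _ = permExp J (fun π => permExp J (fun σ =>
          ∑ S : Finset (Fin n), (g (S.image π) - g (S.image σ)) ^ 2)) / 2 := by
        simp only [permExp_sq_sub_sq_permExp, ← sum_div, permExp_sum]
    _ = permExp J (fun π => permExp J (fun σ =>
          ∑ S : Finset (Fin n), (g S - g (S.image (σ * π⁻¹))) ^ 2)) / 2 := by
        congr 1
        refine permExp_congr J fun π _ => permExp_congr J fun σ _ => ?_
        rw [← sum_univ_image_perm _ π⁻¹]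
        simp [image_image, Function.comp_def]
    _ = permExp J (fun _ => permExp J (fun σ =>
          ∑ S : Finset (Fin n), (g S - g (S.image σ)) ^ 2)) / 2 := by
        congr 1
        exact permExp_congr J fun π hπ => permExp_comp_mul_right J (inv_mem_permsOn hπ)
          (fun σ => ∑ S : Finset (Fin n), (g S - g (S.image σ)) ^ 2)
    _ = _ := by rw [permExp_const]

lemma ite_ne_eq_sq_sub_div_four {a b : ℝ} (ha : a = 1 ∨ a = -1) (hb : b = 1 ∨ b = -1) :
    (if a ≠ b then (1 : ℝ) else 0) = (a - b) ^ 2 / 4 := by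
  rcases ha with rfl | rfl <;> rcases hb with rfl | rfl <;> norm_num

lemma symInfR_eq_permExp (f : (Fin n → Bool) → ℝ) (hf : ∀ x, f x = 1 ∨ f x = -1)
    (J : Finset (Fin n)) :
    SymInfR f J = permExp J (fun π => (∑ x, (f x - f (permApply π x)) ^ 2) / 2 ^ n) / 4 := by
  rw [SymInfR, permExp, card_filter]
  push_cast
  rw [sum_product, sum_comm]
  simp only [ite_ne_eq_sq_sub_div_four (hf _) (hf _), ← sum_div]
  field_simp

/-- Fourier representation of symmetric influence. -/
theorem symInf_fourier (n : ℕ) (f : (Fin n → Bool) → ℝ)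
    (hf : ∀ x, f x = 1 ∨ f x = -1) (J : Finset (Fin n)) :
    SymInfR f J = (1 / 2) * ∑ S : Finset (Fin n),
      (permExp J (fun π => (fhat f (S.image π)) ^ 2)
        - (permExp J (fun π => fhat f (S.image π))) ^ 2) := by
  have parseval : ∀ π, (∑ x, (f x - f (permApply π x)) ^ 2) / 2 ^ n
      = ∑ S : Finset (Fin n), (fhat f S - fhat f (S.image π)) ^ 2 := fun π => by
    simpa only [fhat_sub, fhat_comp_permApply, Pi.sub_apply] using
      (sum_fhat_sq (f - fun x => f (permApply π x))).symm
  rw [symInfR_eq_permExp f hf J, sum_permExp_variance_image]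
  simp only [parseval]
  ring
end

section
/- Let J, K ⊆ [n], let π be uniform over S_{J∪K}, and let π_J, π_K be independent and uniform over S_J, S_K respectively. For any fixed x ∈ {0,1}^n, the total variation distance between the distribution of πx and the distribution of π_J(π_K x) equals the total variation distance between the hypergeometric distributions H(|J∪K|, |x_{J∪K}|, |K\J|) and H(|K|, |x_K|, |K\J|). -/
open Finset

variable {n : ℕ}

/-- Hamming weight of `x` restricted to the set `A`. -/
def wOn {n : ℕ} (x : Fin n → Bool) (A : Finset (Fin n)) : ℕ :=
  (A.filter (fun i => x i = true)).card

/-- The hypergeometric pmf: probability of `i` red balls when drawing `k` balls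
without replacement from `N` balls, `M` of which are red. -/
noncomputable def hypPMF (N M k i : ℕ) : ℝ :=
  ((M.choose i : ℝ) * ((N - M).choose (k - i) : ℝ)) / (N.choose k : ℝ)

/-- The distribution of `πx` for `π` uniform over `S_{J∪K}`. -/
noncomputable def distOne {n : ℕ} (J K : Finset (Fin n)) (x y : Fin n → Bool) : ℝ :=
  (((permsOn (J ∪ K)).filter (fun π => permApply π x = y)).card : ℝ) /
    ((permsOn (J ∪ K)).card : ℝ)

/-- The distribution of `π_J (π_K x)` for independent uniform `π_J ∈ S_J`, `π_K ∈ S_K`. -/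
noncomputable def distTwo {n : ℕ} (J K : Finset (Fin n)) (x y : Fin n → Bool) : ℝ :=
  (((permsOn J ×ˢ permsOn K).filter
      (fun p : Equiv.Perm (Fin n) × Equiv.Perm (Fin n) =>
        permApply p.1 (permApply p.2 x) = y)).card : ℝ) /
    (((permsOn J).card : ℝ) * ((permsOn K).card : ℝ))

/-!
Let `O` be the set of vectors that agree with `x` outside `A = J ∪ K` and have the same weight
on `A`. It is the orbit of `x` under `S_A`, so `πx` is uniform on `O`. The law of `π_J (π_K x)` is
also carried by `O`, and it is invariant under `S_J` and under `S_{K∖J}` (which commutes with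
`S_J`). Together these two groups act transitively on each fibre `{y ∈ O | |y_{K∖J}| = a}`, so both
laws are uniform on every fibre and their total variation distance is that of the laws of
`|y_{K∖J}|`. For `πx` this law is `H(|A|, |x_A|, |K∖J|)`; since `π_J` fixes `K ∖ J` pointwise,
for `π_J (π_K x)` it is the law of `|(π_K x)_{K∖J}|`, i.e. `H(|K|, |x_K|, |K∖J|)`.
-/

lemma Finset.sum_card_filter_eq_card_filter_mem {α β : Type*} [DecidableEq β] (s : Finset α)
    (f : α → β) (t : Finset β) : ∑ b ∈ t, #{a ∈ s | f a = b} = #{a ∈ s | f a ∈ t} := by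
  rw [card_eq_sum_card_fiberwise (s := {a ∈ s | f a ∈ t}) (f := f) (t := t)
    fun a ha => (mem_filter.1 ha).2]
  refine sum_congr rfl fun b hb => ?_
  rw [filter_filter]
  exact congrArg card (filter_congr fun a _ => ⟨fun h => ⟨h ▸ hb, h⟩, And.right⟩)

lemma Finset.sum_abs_eq_sum_abs_sum_fiberwise {ι κ : Type*} [DecidableEq κ] {s : Finset ι}
    {t : Finset κ} {g : ι → κ} (hg : ∀ i ∈ s, g i ∈ t) {f : ι → ℝ}
    (hf : ∀ i ∈ s, ∀ j ∈ s, g i = g j → f i = f j) :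
    ∑ i ∈ s, |f i| = ∑ k ∈ t, |∑ i ∈ s with g i = k, f i| := by
  rw [← sum_fiberwise_of_maps_to hg]
  refine sum_congr rfl fun k _ => ?_
  obtain hempty | ⟨i₀, hi₀⟩ := eq_empty_or_nonempty {i ∈ s | g i = k}
  · simp [hempty]
  have hconst : ∀ i ∈ {i ∈ s | g i = k}, f i = f i₀ := fun i hi => by
    rw [mem_filter] at hi hi₀
    exact hf i hi.1 i₀ hi₀.1 (hi.2.trans hi₀.2.symm)
  rw [sum_congr rfl fun i hi => congrArg abs (hconst i hi), sum_congr rfl hconst, sum_const,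
    sum_const, nsmul_eq_mul, nsmul_eq_mul, abs_mul, Nat.abs_cast]

lemma Nat.choose_mul_choose_sub_comm (m p q : ℕ) :
    m.choose p * (m - p).choose q = m.choose q * (m - q).choose p := by
  have hp := Nat.choose_mul (n := m) (Nat.le_add_right p q)
  have hq := Nat.choose_mul (n := m) (Nat.le_add_left q p)
  rw [Nat.add_sub_cancel_left] at hp
  rw [Nat.add_sub_cancel] at hq
  rw [← hp, ← hq, Nat.choose_symm_add]

lemma Nat.choose_mul_choose_mul_choose_comm {N w k a : ℕ} (haw : a ≤ w) (hak : a ≤ k) :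
    N.choose w * w.choose a * (N - w).choose (k - a) =
      N.choose k * k.choose a * (N - k).choose (w - a) := by
  rw [Nat.choose_mul haw, Nat.choose_mul hak, mul_assoc, mul_assoc,
    show N - w = N - a - (w - a) by omega, show N - k = N - a - (k - a) by omega,
    Nat.choose_mul_choose_sub_comm]

lemma hypPMF_comm {N w k a : ℕ} (hw : w ≤ N) (hk : k ≤ N) (haw : a ≤ w) (hak : a ≤ k) :
    hypPMF N w k a = hypPMF N k w a := by
  have hNk : (N.choose k : ℝ) ≠ 0 := by exact_mod_cast (Nat.choose_pos hk).ne'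
  have hNw : (N.choose w : ℝ) ≠ 0 := by exact_mod_cast (Nat.choose_pos hw).ne'
  rw [hypPMF, hypPMF, div_eq_div_iff hNk hNw]
  have := Nat.choose_mul_choose_mul_choose_comm (N := N) haw hak
  norm_cast
  linarith

section

variable {A B C J K : Finset (Fin n)} {σ τ ρ : Equiv.Perm (Fin n)} {x y y' : Fin n → Bool}
  {a : ℕ}

@[simp] lemma mem_permsOn : σ ∈ permsOn A ↔ ∀ i ∉ A, σ i = i := by
  simp [permsOn]

lemma mul_mem_permsOn_s11 (hσ : σ ∈ permsOn A) (hτ : τ ∈ permsOn A) : σ * τ ∈ permsOn A := by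
  simp_all

lemma inv_mem_permsOn_s11 (hσ : σ ∈ permsOn A) : σ⁻¹ ∈ permsOn A := by
  simp only [mem_permsOn, Equiv.Perm.inv_eq_iff_eq] at *
  exact fun i hi => (hσ i hi).symm

lemma mul_mem_permsOn_iff (hρ : ρ ∈ permsOn A) : ρ * σ ∈ permsOn A ↔ σ ∈ permsOn A :=
  ⟨fun h => by simpa using mul_mem_permsOn_s11 (inv_mem_permsOn_s11 hρ) h, mul_mem_permsOn_s11 hρ⟩

lemma permsOn_mono (h : A ⊆ B) : permsOn A ⊆ permsOn B := fun σ hσ => by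
  simp only [mem_permsOn] at *
  exact fun i hi => hσ i fun hA => hi (h hA)

lemma apply_mem_iff_of_mem_permsOn (hσ : σ ∈ permsOn A) {i : Fin n} : σ i ∈ A ↔ i ∈ A := by
  refine ⟨fun h => ?_, fun h => ?_⟩ <;> by_contra h'
  · exact h' (by rwa [mem_permsOn.1 hσ i h'] at h)
  · exact h' (by rwa [σ.injective (mem_permsOn.1 hσ _ h')])

@[simp] lemma permApply_one : permApply 1 x = x := rfl

lemma permApply_mul : permApply (σ * τ) x = permApply σ (permApply τ x) := rfl

lemma permApply_eq_iff : permApply σ x = y ↔ ∀ i, y (σ i) = x i := by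
  simp only [funext_iff, permApply]
  exact ⟨fun h i => by simpa using (h (σ i)).symm, fun h j => by simpa using (h (σ.symm j)).symm⟩

lemma permApply_injective : Function.Injective (permApply σ) := fun x y h => by
  simpa [← permApply_mul, permApply] using congrArg (permApply σ⁻¹) h

lemma permApply_apply_of_notMem (hσ : σ ∈ permsOn A) {i : Fin n} (hi : i ∉ A) :
    permApply σ x i = x i := by
  simpa [permApply] using congrArg x (mem_permsOn.1 (inv_mem_permsOn_s11 hσ) i hi)

lemma wOn_congr (h : ∀ i ∈ A, x i = y i) : wOn x A = wOn y A := by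
  unfold wOn
  exact congrArg card (filter_congr fun i hi => by rw [h i hi])

lemma wOn_union (h : Disjoint A B) : wOn x (A ∪ B) = wOn x A + wOn x B := by
  unfold wOn
  rw [filter_union, card_union_of_disjoint (disjoint_filter_filter h)]

lemma wOn_eq_wOn_add_wOn_sdiff (y : Fin n → Bool) (hB : B ⊆ A) :
    wOn y A = wOn y B + wOn y (A \ B) := by
  rw [← wOn_union disjoint_sdiff, union_sdiff_of_subset hB]

lemma wOn_le_wOn (y : Fin n → Bool) (hB : B ⊆ A) : wOn y B ≤ wOn y A :=
  (wOn_eq_wOn_add_wOn_sdiff y hB).symm ▸ Nat.le_add_right _ _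

lemma wOn_le_card : wOn x A ≤ #A := card_filter_le _ _

lemma card_filter_eq_false_eq_card_sub_wOn : #(A.filter (x · = false)) = #A - wOn x A := by
  rw [← card_filter_add_card_filter_not (s := A) (p := (x · = true)), wOn]
  simp

lemma wOn_permApply (hσ : σ ∈ permsOn A) : wOn (permApply σ x) A = wOn x A := by
  refine card_equiv σ⁻¹ fun i => ?_
  rw [mem_filter, mem_filter]
  exact and_congr_left' (apply_mem_iff_of_mem_permsOn (inv_mem_permsOn_s11 hσ)).symm

lemma wOn_permApply_of_disjoint (hσ : σ ∈ permsOn A) (h : Disjoint A B) :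
    wOn (permApply σ x) B = wOn x B :=
  wOn_congr fun _ hi => permApply_apply_of_notMem hσ (disjoint_right.1 h hi)

lemma wOn_override_self : wOn (override A x y) A = wOn y A :=
  wOn_congr fun i hi => by simp [override, hi]

lemma wOn_override_of_disjoint (h : Disjoint A B) : wOn (override A x y) B = wOn x B :=
  wOn_congr fun i hi => by simp [override, disjoint_right.1 h hi]

lemma filter_override_mem {S : Finset (Fin n)} (hS : S ⊆ A) :
    A.filter (override A x (· ∈ S) · = true) = S := by
  ext i
  by_cases hi : i ∈ A
  · simp [override, hi]
  · simpa [hi] using fun h => hi (hS h)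

lemma card_agree_wOn_eq_choose (A : Finset (Fin n)) (x : Fin n → Bool) (w : ℕ) :
    #{y | (∀ i ∉ A, y i = x i) ∧ wOn y A = w} = (#A).choose w := by
  rw [← card_powersetCard]
  refine card_nbij' (fun y => A.filter (y · = true)) (fun S => override A x (· ∈ S)) ?_ ?_ ?_ ?_
  · intro y hy
    simp only [coe_filter, mem_univ, true_and, Set.mem_ofPred_eq, mem_coe, mem_powersetCard] at hy ⊢
    exact ⟨filter_subset _ _, hy.2⟩
  · intro S hS
    simp only [mem_coe, mem_powersetCard, coe_filter, mem_univ, true_and,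
      Set.mem_ofPred_eq] at hS ⊢
    exact ⟨fun i hi => by simp [override, hi], by rw [wOn, filter_override_mem hS.1, hS.2]⟩
  · intro y hy
    simp only [coe_filter, mem_univ, true_and, Set.mem_ofPred_eq] at hy
    funext i
    by_cases hi : i ∈ A <;> simp [override, hi, hy.1]
  · intro S hS
    exact filter_override_mem (mem_powersetCard.1 hS).1

lemma card_agree_wOn_wOn_eq_choose_mul_choose (hBC : Disjoint B C) (a c : ℕ) :
    #{y | (∀ i ∉ B ∪ C, y i = x i) ∧ wOn y B = a ∧ wOn y C = c} =
      (#B).choose a * (#C).choose c := by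
  rw [← card_agree_wOn_eq_choose B x a, ← card_agree_wOn_eq_choose C x c, ← card_product]
  refine card_nbij' (fun y => (override B x y, override C x y))
    (fun p => override C p.1 p.2) ?_ ?_ ?_ ?_
  · intro y hy
    simp only [coe_filter, mem_univ, true_and, Set.mem_ofPred_eq, coe_product,
      Set.mem_prod] at hy ⊢
    refine ⟨⟨fun i hi => by simp [override, hi], ?_⟩, ⟨fun i hi => by simp [override, hi], ?_⟩⟩
    · rw [wOn_override_self, hy.2.1]
    · rw [wOn_override_self, hy.2.2]
  · rintro ⟨u, v⟩ huv
    simp only [coe_filter, mem_univ, true_and, Set.mem_ofPred_eq, coe_product,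
      Set.mem_prod] at huv ⊢
    refine ⟨fun i hi => ?_, ?_, ?_⟩
    · simp only [mem_union, not_or] at hi
      simp [override, hi.2, huv.1.1 i hi.1]
    · rw [wOn_override_of_disjoint hBC.symm, huv.1.2]
    · rw [wOn_override_self, huv.2.2]
  · intro y hy
    simp only [coe_filter, mem_univ, true_and, Set.mem_ofPred_eq] at hy
    funext i
    by_cases hiC : i ∈ C
    · simp [override, hiC]
    by_cases hiB : i ∈ B
    · simp [override, hiC, hiB]
    · simp [override, hiC, hiB, hy.1 i (by simp [hiB, hiC])]
  · rintro ⟨u, v⟩ huv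
    simp only [coe_filter, mem_univ, true_and, Set.mem_ofPred_eq, coe_product,
      Set.mem_prod] at huv
    ext i
    · by_cases hiB : i ∈ B
      · simp [override, hiB, disjoint_left.1 hBC hiB]
      · simp [override, hiB, huv.1.1 i hiB]
    · by_cases hiC : i ∈ C
      · simp [override, hiC]
      · simp [override, hiC, huv.2.1 i hiC]

variable (A x) in
def rearrangements : Finset (Fin n → Bool) :=
  {y | (∀ i ∉ A, y i = x i) ∧ wOn y A = wOn x A}

lemma rearrangements_eq_of_mem (hy : y ∈ rearrangements A x) :
    rearrangements A y = rearrangements A x := by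
  simp only [rearrangements, mem_filter, mem_univ, true_and] at hy
  ext z
  simp only [rearrangements, mem_filter, mem_univ, true_and, hy.2]
  exact and_congr_left' (forall₂_congr fun i hi => by rw [hy.1 i hi])

lemma permApply_mem_rearrangements (hσ : σ ∈ permsOn A) :
    permApply σ x ∈ rearrangements A x := by
  simp only [rearrangements, mem_filter, mem_univ, true_and]
  exact ⟨fun i hi => permApply_apply_of_notMem hσ hi, wOn_permApply hσ⟩

lemma exists_permApply_eq_of_mem_rearrangements (hy : y ∈ rearrangements A x) :
    ∃ σ ∈ permsOn A, permApply σ x = y := by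
  simp only [rearrangements, mem_filter, mem_univ, true_and] at hy
  have card_fiber (z : Fin n → Bool) (b : Bool) :
      Fintype.card {i : A // z i = b} = #(A.filter (z · = b)) := by
    rw [Fintype.card_subtype, ← card_map (Function.Embedding.subtype _)]
    congr 1; ext i; simp [and_comm]
  have fiber_equiv (b : Bool) : {i : A // x i = b} ≃ {i : A // y i = b} := by
    refine Fintype.equivOfCardEq ?_
    cases b
    · rw [card_fiber, card_fiber, card_filter_eq_false_eq_card_sub_wOn,
        card_filter_eq_false_eq_card_sub_wOn, hy.2]
    · exact (card_fiber x true).trans (hy.2.symm.trans (card_fiber y true).symm)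
  let τ : Equiv.Perm A := Equiv.ofFiberEquiv fiber_equiv
  refine ⟨Equiv.Perm.ofSubtype τ, ?_, permApply_eq_iff.2 fun i => ?_⟩
  · exact mem_permsOn.2 fun i hi => Equiv.Perm.ofSubtype_apply_of_not_mem τ hi
  · by_cases hi : i ∈ A
    · rw [Equiv.Perm.ofSubtype_apply_of_mem τ hi]
      exact Equiv.ofFiberEquiv_map fiber_equiv ⟨i, hi⟩
    · rw [Equiv.Perm.ofSubtype_apply_of_not_mem τ hi, hy.1 i hi]

lemma mem_rearrangements_iff : y ∈ rearrangements A x ↔ ∃ σ ∈ permsOn A, permApply σ x = y :=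
  ⟨exists_permApply_eq_of_mem_rearrangements,
    fun ⟨_, hσ, h⟩ => h ▸ permApply_mem_rearrangements hσ⟩

lemma exists_permApply_permApply_eq (hJB : Disjoint J B) (hy' : y' ∈ rearrangements (J ∪ B) y)
    (hB : wOn y B = wOn y' B) :
    ∃ ρ ∈ permsOn B, ∃ ρ' ∈ permsOn J, permApply ρ' (permApply ρ y) = y' := by
  simp only [rearrangements, mem_filter, mem_univ, true_and, mem_union, not_or] at hy'
  have hyB : override B y y' ∈ rearrangements B y := by
    simp only [rearrangements, mem_filter, mem_univ, true_and]
    exact ⟨fun i hi => by simp [override, hi], by rw [wOn_override_self, hB]⟩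
  have hy'J : y' ∈ rearrangements J (override B y y') := by
    simp only [rearrangements, mem_filter, mem_univ, true_and]
    refine ⟨fun i hi => ?_, ?_⟩
    · by_cases hiB : i ∈ B
      · simp [override, hiB]
      · simp [override, hiB, hy'.1 i ⟨hi, hiB⟩]
    · rw [wOn_override_of_disjoint hJB.symm]
      have := hy'.2
      rw [wOn_union hJB, wOn_union hJB, hB] at this
      omega
  obtain ⟨ρ, hρ, hρy⟩ := mem_rearrangements_iff.1 hyB
  obtain ⟨ρ', hρ', hρ'y⟩ := mem_rearrangements_iff.1 hy'J
  exact ⟨ρ, hρ, ρ', hρ', hρy ▸ hρ'y⟩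

lemma card_filter_rearrangements_wOn (hB : B ⊆ A) (ha : a ≤ wOn x A) :
    #{y ∈ rearrangements A x | wOn y B = a} =
      (#B).choose a * (#A - #B).choose (wOn x A - a) := by
  rw [← card_sdiff_of_subset hB, ← card_agree_wOn_wOn_eq_choose_mul_choose (x := x) disjoint_sdiff,
    union_sdiff_of_subset hB, rearrangements, filter_filter]
  refine congrArg card (filter_congr fun y _ => ?_)
  have := wOn_eq_wOn_add_wOn_sdiff y hB
  constructor
  · rintro ⟨⟨hout, hw⟩, hy⟩
    exact ⟨hout, hy, by omega⟩
  · rintro ⟨hout, hy, hy'⟩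
    exact ⟨⟨hout, by omega⟩, hy⟩

lemma card_filter_permApply_eq_permApply (hρ : ρ ∈ permsOn A) :
    #{σ ∈ permsOn A | permApply σ x = permApply ρ y} = #{σ ∈ permsOn A | permApply σ x = y} :=
  (card_equiv (Equiv.mulLeft ρ) fun σ => by
    simp only [mem_filter, Equiv.coe_mulLeft, mul_mem_permsOn_iff hρ, permApply_mul,
      permApply_injective.eq_iff]).symm

lemma card_filter_permApply_eq_of_mem (hy : y ∈ rearrangements A x) :
    #{σ ∈ permsOn A | permApply σ x = y} = #{σ ∈ permsOn A | permApply σ x = x} := by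
  obtain ⟨ρ, hρ, rfl⟩ := mem_rearrangements_iff.1 hy
  exact card_filter_permApply_eq_permApply hρ

lemma card_filter_permApply_eq_of_notMem (hy : y ∉ rearrangements A x) :
    #{σ ∈ permsOn A | permApply σ x = y} = 0 :=
  card_eq_zero.2 <| filter_eq_empty_iff.2 fun _ hσ h => hy (h ▸ permApply_mem_rearrangements hσ)

lemma card_filter_permApply (P : (Fin n → Bool) → Prop) [DecidablePred P] :
    #{σ ∈ permsOn A | P (permApply σ x)} =
      #{y ∈ rearrangements A x | P y} * #{σ ∈ permsOn A | permApply σ x = x} := by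
  calc #{σ ∈ permsOn A | P (permApply σ x)}
      = #{σ ∈ permsOn A | permApply σ x ∈ {y ∈ rearrangements A x | P y}} := by
        refine congrArg card (filter_congr fun σ hσ => ?_)
        rw [mem_filter, and_iff_right (permApply_mem_rearrangements hσ)]
    _ = ∑ y ∈ {y ∈ rearrangements A x | P y}, #{σ ∈ permsOn A | permApply σ x = y} :=
        (sum_card_filter_eq_card_filter_mem _ _ _).symm
    _ = ∑ _ ∈ {y ∈ rearrangements A x | P y}, #{σ ∈ permsOn A | permApply σ x = x} :=
        sum_congr rfl fun y hy => card_filter_permApply_eq_of_mem (mem_filter.1 hy).1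
    _ = _ := by rw [sum_const, smul_eq_mul]

lemma card_permsOn_eq :
    #(permsOn A) = #(rearrangements A x) * #{σ ∈ permsOn A | permApply σ x = x} := by
  simpa using card_filter_permApply (A := A) (x := x) (fun _ => True)

lemma card_filter_wOn_permApply_div_card_permsOn (hB : B ⊆ A) (ha : a ≤ #B) :
    (#{σ ∈ permsOn A | wOn (permApply σ x) B = a} : ℝ) / #(permsOn A) =
      hypPMF #A (wOn x A) #B a := by
  have hstab : (#{σ ∈ permsOn A | permApply σ x = x} : ℝ) ≠ 0 := by
    exact_mod_cast (card_pos.2 ⟨1, by simp⟩).ne'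
  rw [card_filter_permApply (wOn · B = a), card_permsOn_eq (x := x), Nat.cast_mul, Nat.cast_mul,
    mul_div_mul_right _ _ hstab]
  by_cases haw : a ≤ wOn x A
  · rw [card_filter_rearrangements_wOn hB haw, rearrangements, card_agree_wOn_eq_choose,
      hypPMF_comm wOn_le_card (card_le_card hB) haw ha, hypPMF]
    norm_cast
  · have hempty : #{y ∈ rearrangements A x | wOn y B = a} = 0 := by
      refine card_eq_zero.2 (filter_eq_empty_iff.2 fun y hy hyB => haw ?_)
      simp only [rearrangements, mem_filter] at hy
      exact hyB ▸ hy.2.2 ▸ wOn_le_wOn y hB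
    rw [hempty, hypPMF, Nat.choose_eq_zero_of_lt (not_le.1 haw)]
    simp

lemma distOne_eq_zero (hy : y ∉ rearrangements (J ∪ K) x) : distOne J K x y = 0 := by
  rw [distOne, card_filter_permApply_eq_of_notMem hy, Nat.cast_zero, zero_div]

lemma distOne_eq_of_mem (hy : y ∈ rearrangements (J ∪ K) x)
    (hy' : y' ∈ rearrangements (J ∪ K) x) : distOne J K x y = distOne J K x y' := by
  rw [distOne, distOne, card_filter_permApply_eq_of_mem hy, card_filter_permApply_eq_of_mem hy']

lemma sum_distOne_filter_wOn :
    ∑ y ∈ {y ∈ rearrangements (J ∪ K) x | wOn y B = a}, distOne J K x y =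
      #{σ ∈ permsOn (J ∪ K) | wOn (permApply σ x) B = a} / #(permsOn (J ∪ K)) := by
  simp only [distOne, ← sum_div, ← Nat.cast_sum, sum_card_filter_eq_card_filter_mem]
  refine congrArg (fun m : ℕ => (m : ℝ) / _) (congrArg card (filter_congr fun σ hσ => ?_))
  rw [mem_filter, and_iff_right (permApply_mem_rearrangements hσ)]

lemma permApply_permApply_mem_rearrangements (hσ : σ ∈ permsOn J) (hτ : τ ∈ permsOn K) :
    permApply σ (permApply τ x) ∈ rearrangements (J ∪ K) x :=
  permApply_mul ▸ permApply_mem_rearrangements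
    (mul_mem_permsOn_s11 (permsOn_mono subset_union_left hσ) (permsOn_mono subset_union_right hτ))

lemma distTwo_eq_zero (hy : y ∉ rearrangements (J ∪ K) x) : distTwo J K x y = 0 := by
  rw [distTwo, card_eq_zero.2, Nat.cast_zero, zero_div]
  exact filter_eq_empty_iff.2 fun p hp h =>
    hy (h ▸ permApply_permApply_mem_rearrangements (mem_product.1 hp).1 (mem_product.1 hp).2)

lemma sum_distTwo_filter_wOn :
    ∑ y ∈ {y ∈ rearrangements (J ∪ K) x | wOn y (K \ J) = a}, distTwo J K x y =
      #{τ ∈ permsOn K | wOn (permApply τ x) (K \ J) = a} / #(permsOn K) := by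
  have hfilter : {p ∈ permsOn J ×ˢ permsOn K | permApply p.1 (permApply p.2 x) ∈
      {y ∈ rearrangements (J ∪ K) x | wOn y (K \ J) = a}} =
        permsOn J ×ˢ {τ ∈ permsOn K | wOn (permApply τ x) (K \ J) = a} := by
    rw [← filter_product_right]
    refine filter_congr fun p hp => ?_
    rw [mem_product] at hp
    rw [mem_filter, and_iff_right (permApply_permApply_mem_rearrangements hp.1 hp.2),
      wOn_permApply_of_disjoint hp.1 disjoint_sdiff]
  have hJ : (#(permsOn J) : ℝ) ≠ 0 := by exact_mod_cast (card_pos.2 ⟨1, by simp⟩).ne'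
  simp only [distTwo, ← sum_div, ← Nat.cast_sum, sum_card_filter_eq_card_filter_mem]
  rw [hfilter, card_product, Nat.cast_mul, mul_div_mul_left _ _ hJ]

lemma distTwo_permApply_of_mem_left (hρ : ρ ∈ permsOn J) :
    distTwo J K x (permApply ρ y) = distTwo J K x y := by
  refine congrArg (fun m : ℕ => (m : ℝ) / _) (card_equiv
    ((Equiv.mulLeft ρ).prodCongr (Equiv.refl _)) fun p => ?_).symm
  simp only [mem_filter, mem_product, Equiv.prodCongr_apply, Prod.map, Equiv.coe_mulLeft,
    Equiv.refl_apply, mul_mem_permsOn_iff hρ, permApply_mul, permApply_injective.eq_iff]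

lemma distTwo_permApply_of_mem_sdiff (hρ : ρ ∈ permsOn (K \ J)) :
    distTwo J K x (permApply ρ y) = distTwo J K x y := by
  have hcomm : ∀ σ ∈ permsOn J, σ * ρ = ρ * σ := fun σ hσ =>
    Equiv.Perm.Disjoint.commute fun i => by
      by_cases hi : i ∈ J
      · exact Or.inr (mem_permsOn.1 hρ i fun h => (mem_sdiff.1 h).2 hi)
      · exact Or.inl (mem_permsOn.1 hσ i hi)
  refine congrArg (fun m : ℕ => (m : ℝ) / _) (card_equiv
    ((Equiv.refl _).prodCongr (Equiv.mulLeft ρ)) fun p => ?_).symm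
  simp only [mem_filter, mem_product, Equiv.prodCongr_apply, Prod.map, Equiv.coe_mulLeft,
    Equiv.refl_apply, mul_mem_permsOn_iff (permsOn_mono sdiff_subset hρ)]
  refine and_congr_right fun hp => ?_
  rw [← permApply_mul, ← permApply_mul, ← mul_assoc, hcomm p.1 hp.1, mul_assoc,
    permApply_mul (σ := ρ), permApply_injective.eq_iff]

lemma distTwo_eq_of_wOn_eq (hy : y ∈ rearrangements (J ∪ K) x)
    (hy' : y' ∈ rearrangements (J ∪ K) x) (h : wOn y (K \ J) = wOn y' (K \ J)) :
    distTwo J K x y = distTwo J K x y' := by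
  rw [← rearrangements_eq_of_mem hy, ← union_sdiff_self_eq_union] at hy'
  obtain ⟨ρ, hρ, ρ', hρ', rfl⟩ := exists_permApply_permApply_eq disjoint_sdiff hy' h
  rw [distTwo_permApply_of_mem_left hρ', distTwo_permApply_of_mem_sdiff hρ]

end

/-- the TV distance between `πx` and `π_J π_K x` equals the TV distance
between the corresponding hypergeometric distributions. -/
theorem tv_perm_eq_tv_hypergeometric (n : ℕ) (J K : Finset (Fin n)) (x : Fin n → Bool) :
    (1 / 2) * ∑ y : Fin n → Bool, |distOne J K x y - distTwo J K x y| =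
      (1 / 2) * ∑ i ∈ Finset.range ((K \ J).card + 1),
        |hypPMF (J ∪ K).card (wOn x (J ∪ K)) (K \ J).card i -
          hypPMF K.card (wOn x K) (K \ J).card i| := by
  congr 1
  calc ∑ y, |distOne J K x y - distTwo J K x y|
      = ∑ y ∈ rearrangements (J ∪ K) x, |distOne J K x y - distTwo J K x y| := by
        refine (sum_subset (subset_univ _) fun y _ hy => ?_).symm
        rw [distOne_eq_zero hy, distTwo_eq_zero hy, sub_zero, abs_zero]
    _ = ∑ i ∈ range (#(K \ J) + 1),
          |∑ y ∈ rearrangements (J ∪ K) x with wOn y (K \ J) = i,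
            (distOne J K x y - distTwo J K x y)| :=
        sum_abs_eq_sum_abs_sum_fiberwise (fun _ _ => mem_range.2 (Nat.lt_succ_of_le wOn_le_card))
          fun y hy y' hy' h => by rw [distOne_eq_of_mem hy hy', distTwo_eq_of_wOn_eq hy hy' h]
    _ = _ := by
        refine sum_congr rfl fun i hi => ?_
        have hi : i ≤ #(K \ J) := Nat.lt_succ_iff.1 (mem_range.1 hi)
        rw [sum_sub_distrib, sum_distOne_filter_wOn, sum_distTwo_filter_wOn,
          card_filter_wOn_permApply_div_card_permsOn (sdiff_subset.trans subset_union_right) hi,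
          card_filter_wOn_permApply_div_card_permsOn sdiff_subset hi]
end
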